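/- There exists a non-decisive but complete defeasible theory: for D with rules r₁: p ⇒ p and r₂: ⇒ ¬p and superiority r₂ > r₁, the dependency graph of D has a cycle (so D is not decisive), yet D ⊢ -∂p and D ⊢ +∂¬p. -/

import Mathlib

/-! Core: propositional Defeasible Logic (proof theory via derivations) -/

/-- Literals: positive or negative atoms. -/
inductive Lit : Type
  | pos : ℕ → Lit
  | neg : ℕ → Lit
deriving DecidableEq, Repr

/-- The complement `~q` of a literal. -/
def Lit.compl : Lit → Lit
  | .pos n => .neg n
  | .neg n => .pos n

/-- The three kinds of rules in a defeasible theory. -/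
inductive RuleKind : Type
  | strict | defeasible | defeater
deriving DecidableEq, Repr

/-- A rule with a unique label (name), kind, antecedent and literal head. -/
structure DLRule : Type where
  name : ℕ
  kind : RuleKind
  ante : List Lit
  head : Lit
deriving DecidableEq, Repr

/-- A (finite, propositional) defeasible theory `D = (F, R, >)`. -/
structure DTheory : Type where
  facts : Finset Lit
  rules : Finset DLRule
  sup : DLRule → DLRule → Prop

/-- The four proof tags `+Δ`, `-Δ`, `+∂`, `-∂`. -/
inductive Tag : Type
  | pDelta | mDelta | pPartial | mPartial
deriving DecidableEq, Repr

/-- A tagged literal (a conclusion). -/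
abbrev TaggedLit := Tag × Lit

/-- The inference conditions of Defeasible Logic: the tagged literal `c` may
be appended to a derivation whose earlier lines are `prev`. -/
def ValidLine (D : DTheory) (prev : List TaggedLit) : TaggedLit → Prop
  | (Tag.pDelta, q) =>
      q ∈ D.facts ∨
      ∃ r ∈ D.rules, r.kind = RuleKind.strict ∧ r.head = q ∧
        ∀ a ∈ r.ante, (Tag.pDelta, a) ∈ prev
  | (Tag.mDelta, q) =>
      q ∉ D.facts ∧
      ∀ r ∈ D.rules, r.kind = RuleKind.strict → r.head = q →
        ∃ a ∈ r.ante, (Tag.mDelta, a) ∈ prev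
  | (Tag.pPartial, q) =>
      (Tag.pDelta, q) ∈ prev ∨
      ((∃ r ∈ D.rules, r.kind ≠ RuleKind.defeater ∧ r.head = q ∧
          ∀ a ∈ r.ante, (Tag.pPartial, a) ∈ prev) ∧
       (Tag.mDelta, q.compl) ∈ prev ∧
       ∀ s ∈ D.rules, s.head = q.compl →
         (∃ a ∈ s.ante, (Tag.mPartial, a) ∈ prev) ∨
         (∃ t ∈ D.rules, t.kind ≠ RuleKind.defeater ∧ t.head = q ∧
           (∀ a ∈ t.ante, (Tag.pPartial, a) ∈ prev) ∧ D.sup t s))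
  | (Tag.mPartial, q) =>
      (Tag.mDelta, q) ∈ prev ∧
      ((∀ r ∈ D.rules, r.kind ≠ RuleKind.defeater → r.head = q →
          ∃ a ∈ r.ante, (Tag.mPartial, a) ∈ prev) ∨
       (Tag.pDelta, q.compl) ∈ prev ∨
       (∃ s ∈ D.rules, s.head = q.compl ∧
          (∀ a ∈ s.ante, (Tag.pPartial, a) ∈ prev) ∧
          ∀ t ∈ D.rules, t.kind ≠ RuleKind.defeater → t.head = q →
            (∃ a ∈ t.ante, (Tag.mPartial, a) ∈ prev) ∨ ¬ D.sup t s))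

/-- `P` is a derivation in `D`: a finite sequence of tagged literals each of
which satisfies the inference conditions w.r.t. the earlier lines. -/
def IsDerivation (D : DTheory) (P : List TaggedLit) : Prop :=
  ∀ (i : ℕ) (h : i < P.length), ValidLine D (P.take i) (P.get ⟨i, h⟩)

/-- `D ⊢ (t, q)` : the tagged literal is a line of some derivation in `D`. -/
def Proves (D : DTheory) (t : Tag) (q : Lit) : Prop :=
  ∃ P : List TaggedLit, IsDerivation D P ∧ (t, q) ∈ P

/-- `D ⊢ +Δ q`. -/
abbrev PDelta (D : DTheory) (q : Lit) : Prop := Proves D Tag.pDelta q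
/-- `D ⊢ -Δ q`. -/
abbrev MDelta (D : DTheory) (q : Lit) : Prop := Proves D Tag.mDelta q
/-- `D ⊢ +∂ q`. -/
abbrev PPartial (D : DTheory) (q : Lit) : Prop := Proves D Tag.pPartial q
/-- `D ⊢ -∂ q`. -/
abbrev MPartial (D : DTheory) (q : Lit) : Prop := Proves D Tag.mPartial q

/-- `q` is strictly unknowable in `D`. -/
def StrictlyUnknowable (D : DTheory) (q : Lit) : Prop := ¬ PDelta D q ∧ ¬ MDelta D q

/-- `q` is defeasibly unknowable in `D`. -/
def DefeasiblyUnknowable (D : DTheory) (q : Lit) : Prop := ¬ PPartial D q ∧ ¬ MPartial D q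

/-- `q` is unknowable in `D`. -/
def Unknowable (D : DTheory) (q : Lit) : Prop :=
  StrictlyUnknowable D q ∨ DefeasiblyUnknowable D q

/-- The point `{q, ~q}` of the dependency graph corresponding to a literal `q`. -/
def Lit.pt (q : Lit) : Set Lit := {q, q.compl}

/-- Arc of the dependency graph `DG(D)` from point `{b,~b}` to point `{a,~a}`:
there is a strict or defeasible rule whose head is in `{b,~b}` and some antecedent
in `{a,~a}`.  (Stated on representative literals; it is complement-invariant.) -/
def DepArc (D : DTheory) (b a : Lit) : Prop :=
  ∃ r ∈ D.rules, r.kind ≠ RuleKind.defeater ∧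
    (r.head = b ∨ r.head = b.compl) ∧ (a ∈ r.ante ∨ a.compl ∈ r.ante)

/-- `D` is decisive iff its dependency graph is acyclic. -/
def Decisive (D : DTheory) : Prop := ∀ q : Lit, ¬ Relation.TransGen (DepArc D) q q

/-- `r₁ : p ⇒ p`. -/
def rSelf : DLRule := ⟨1, RuleKind.defeasible, [Lit.pos 0], Lit.pos 0⟩
/-- `r₂ : ⇒ ¬p`. -/
def rNeg : DLRule := ⟨2, RuleKind.defeasible, [], Lit.neg 0⟩
/-- The theory `({}, {r₁, r₂}, {r₂ > r₁})`. -/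
def Dnc : DTheory := ⟨∅, {rSelf, rNeg}, fun r s => r = rNeg ∧ s = rSelf⟩

/-! The rule `r₁ : p ⇒ p` is a self-loop of the dependency graph. Still, with no facts and no
strict rules, `-Δp` and `-Δ¬p` hold outright, and the unconditional rule `r₂ : ⇒ ¬p`, superior to
`r₁`, the only rule for `p`, then yields `-∂p` and `+∂¬p`. -/

theorem isDerivation_nil (D : DTheory) : IsDerivation D [] :=
  fun _ h => absurd h (Nat.not_lt_zero _)

theorem IsDerivation.append_singleton {D : DTheory} {P : List TaggedLit} {c : TaggedLit}
    (hP : IsDerivation D P) (hc : ValidLine D P c) : IsDerivation D (P ++ [c]) := by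
  intro i hi
  rw [List.length_append, List.length_singleton] at hi
  rcases Nat.lt_succ_iff_lt_or_eq.mp hi with hlt | rfl
  · simpa [List.take_append_of_le_length hlt.le, List.getElem_append_left hlt] using hP i hlt
  · simpa using hc

theorem validLine_mDelta_of_forall_ne_strict {D : DTheory} {prev : List TaggedLit} {q : Lit}
    (hq : q ∉ D.facts) (hstrict : ∀ r ∈ D.rules, r.kind ≠ RuleKind.strict) :
    ValidLine D prev (Tag.mDelta, q) :=
  ⟨hq, fun r hr hk _ => absurd hk (hstrict r hr)⟩

theorem validLine_mPartial_of_unbeaten {D : DTheory} {prev : List TaggedLit} {q : Lit}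
    {s : DLRule} (hq : (Tag.mDelta, q) ∈ prev) (hs : s ∈ D.rules) (hhead : s.head = q.compl)
    (hante : ∀ a ∈ s.ante, (Tag.pPartial, a) ∈ prev) (hsup : ∀ t ∈ D.rules, ¬ D.sup t s) :
    ValidLine D prev (Tag.mPartial, q) :=
  ⟨hq, Or.inr (Or.inr ⟨s, hs, hhead, hante, fun t ht _ _ => Or.inr (hsup t ht)⟩)⟩

theorem validLine_pPartial_of_superior {D : DTheory} {prev : List TaggedLit} {q : Lit}
    {r : DLRule} (hr : r ∈ D.rules) (hkind : r.kind ≠ RuleKind.defeater) (hhead : r.head = q)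
    (hante : ∀ a ∈ r.ante, (Tag.pPartial, a) ∈ prev) (hcompl : (Tag.mDelta, q.compl) ∈ prev)
    (hsup : ∀ s ∈ D.rules, s.head = q.compl → D.sup r s) :
    ValidLine D prev (Tag.pPartial, q) :=
  Or.inr ⟨⟨r, hr, hkind, hhead, hante⟩, hcompl,
    fun s hs hs' => Or.inr ⟨r, hr, hkind, hhead, hante, hsup s hs hs'⟩⟩

theorem not_decisive_of_head_mem_ante {D : DTheory} {r : DLRule} (hr : r ∈ D.rules)
    (hkind : r.kind ≠ RuleKind.defeater) (hloop : r.head ∈ r.ante) : ¬ Decisive D :=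
  fun h => h r.head (.single ⟨r, hr, hkind, Or.inl rfl, Or.inl hloop⟩)

theorem dnc_mem_rules {r : DLRule} : r ∈ Dnc.rules ↔ r = rSelf ∨ r = rNeg := by
  simp [Dnc]

theorem dnc_kind_ne_strict : ∀ r ∈ Dnc.rules, r.kind ≠ RuleKind.strict := by
  simp [dnc_mem_rules, rSelf, rNeg]

theorem dnc_not_sup_rNeg : ∀ t ∈ Dnc.rules, ¬ Dnc.sup t rNeg :=
  fun _ _ h => absurd h.2 (by simp [rNeg, rSelf])

theorem dnc_rNeg_sup_of_head_eq : ∀ s ∈ Dnc.rules, s.head = Lit.pos 0 → Dnc.sup rNeg s := by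
  intro s hs hhead
  rcases dnc_mem_rules.mp hs with rfl | rfl
  · exact ⟨rfl, rfl⟩
  · simp [rNeg] at hhead

theorem dnc_isDerivation : IsDerivation Dnc
    [(Tag.mDelta, Lit.pos 0), (Tag.mDelta, Lit.neg 0),
      (Tag.mPartial, Lit.pos 0), (Tag.pPartial, Lit.neg 0)] :=
  (isDerivation_nil Dnc
    |>.append_singleton (validLine_mDelta_of_forall_ne_strict (by simp [Dnc]) dnc_kind_ne_strict)
    |>.append_singleton (validLine_mDelta_of_forall_ne_strict (by simp [Dnc]) dnc_kind_ne_strict)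
    |>.append_singleton (validLine_mPartial_of_unbeaten (by simp) (by simp [Dnc]) rfl
      (by simp [rNeg]) dnc_not_sup_rNeg)
    |>.append_singleton (validLine_pPartial_of_superior (by simp [Dnc]) (by simp [rNeg]) rfl
      (by simp [rNeg]) (by simp [Lit.compl]) dnc_rNeg_sup_of_head_eq))

/-- `Dnc` is not decisive (its dependency graph has a cycle),
yet `Dnc ⊢ -∂p` and `Dnc ⊢ +∂¬p`, so it is complete. -/
theorem nondecisive_but_complete :
    ¬ Decisive Dnc ∧ MPartial Dnc (Lit.pos 0) ∧ PPartial Dnc (Lit.neg 0) :=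
  ⟨not_decisive_of_head_mem_ante (r := rSelf) (by simp [Dnc]) (by simp [rSelf]) (by simp [rSelf]),
    ⟨_, dnc_isDerivation, by simp⟩, ⟨_, dnc_isDerivation, by simp⟩⟩
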